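/- Let w ∈ L¹(𝕋) be non-negative and let ν be a finite positive Borel measure on 𝕋, singular with respect to m, satisfying ν(core(w)) = 0. Then there exists a sequence (f_n)_{n≥1} of bounded non-negative Borel functions on 𝕋 such that: (i) the measures f_n dm converge weak-star to ν, i.e. for every continuous g : 𝕋 → ℂ, ∫_𝕋 g·f_n dm → ∫_𝕋 g dν; (ii) ∫_𝕋 f_n dm = ν(𝕋) for every n; and (iii) for every n and m-a.e. x ∈ 𝕋 with w(x) > 0, f_n(x) ≤ log⁺(1/w(x)). -/

import Mathlib

/-!
Write `G = log⁺ (1 / w)`. Since `log⁺ w ≤ |w|` is integrable and `log w = log⁺ w - G`, every arc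
on which `log w` is not integrable carries infinite `G`-mass; so does every ball around a point of
`𝕋 \ core(w)`, and `ν`-almost every point is of this kind. At scale `r`, cut `𝕋` (up to a `ν`-null
set) into `k` Borel pieces `Jᵢ`, each inside a ball `B(xᵢ, r)` with `xᵢ ∉ core(w)`, and under the
obstacle `G / k` truncate and rescale to get a bounded density on `B(xᵢ, r)` of mass `ν(Jᵢ)`.
The sum of these `k` densities lies below `G`, has mass `ν(𝕋)`, and integrates any `g` whose
oscillation at scale `r` is at most `ε` to within `2 ε ν(𝕋)` of `∫ g dν`.
-/

open MeasureTheory Set Filter Metric Complex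
open scoped Real ENNReal Topology

noncomputable section

/-- Normalized arc-length measure on the unit circle (so that m(𝕋) = 1). -/
def mT : Measure ℂ :=
  Measure.map (fun θ : ℝ => Complex.exp (θ * Complex.I))
    ((ENNReal.ofReal (2 * Real.pi))⁻¹ • volume.restrict (Set.Ioc 0 (2 * Real.pi)))

/-- The unit circle 𝕋 as a subset of ℂ. -/
def unitCircle : Set ℂ := Metric.sphere (0:ℂ) 1

/-- Open arc of the unit circle. -/
def openArc (a b : ℝ) : Set ℂ := (fun θ : ℝ => Complex.exp (θ * Complex.I)) '' Set.Ioo a b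

/-- core(w): the union of all open arcs on which log w is m-integrable. -/
def coreSet (w : ℂ → ℝ) : Set ℂ :=
  ⋃ (a : ℝ) (b : ℝ) (_ : MeasureTheory.IntegrableOn (fun x => Real.log (w x)) (openArc a b) mT),
    openArc a b

section

variable {α : Type*} [MeasurableSpace α] {μ : Measure α}

theorem exists_le_of_setLIntegral_eq_top [IsFiniteMeasure μ] {G : α → ℝ} (hG : Measurable G)
    (hG0 : 0 ≤ G) {S : Set α} (hS : MeasurableSet S)
    (htop : ∫⁻ x in S, ENNReal.ofReal (G x) ∂μ = ∞) {c : ℝ} (hc : 0 ≤ c) :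
    ∃ h : α → ℝ, Measurable h ∧ 0 ≤ h ∧ h ≤ G ∧ (∃ C, ∀ x, h x ≤ C) ∧ (∀ x ∉ S, h x = 0) ∧
      ∫ x, h x ∂μ = c := by
  have htendsto : Tendsto (fun n : ℕ => ∫⁻ x in S, ENNReal.ofReal (min n (G x)) ∂μ) atTop
      (𝓝 ∞) := by
    rw [← htop]
    refine lintegral_tendsto_of_tendsto_of_monotone (fun n => by fun_prop)
      (ae_of_all _ fun x m n hmn => ENNReal.ofReal_le_ofReal (by gcongr))
      (ae_of_all _ fun x => (ENNReal.continuous_ofReal.tendsto _).comp ?_)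
    exact tendsto_const_nhds.congr' ((eventually_ge_atTop ⌈G x⌉₊).mono fun n hn =>
      (min_eq_right ((Nat.le_ceil _).trans (Nat.cast_le.2 hn))).symm)
  obtain ⟨n, hn⟩ := (htendsto.eventually (lt_mem_nhds (ENNReal.ofReal_lt_top (r := c)))).exists
  have hmin0 : ∀ x, 0 ≤ min (n : ℝ) (G x) := fun x => le_min n.cast_nonneg (hG0 x)
  set q : α → ℝ := S.indicator fun x => min (n : ℝ) (G x)
  have hq0 : 0 ≤ q := Set.indicator_nonneg fun x _ => hmin0 x
  have hqmin : ∀ x, q x ≤ min (n : ℝ) (G x) := Set.indicator_le_self' fun x _ => hmin0 x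
  have hqm : Measurable q := (measurable_const.min hG).indicator hS
  have hcq : c < ∫ x, q x ∂μ := by
    have hint : IntegrableOn (fun x => min (n : ℝ) (G x)) S μ :=
      .of_bound (measure_lt_top _ _) (by fun_prop) n (ae_of_all _ fun x => by
        rw [Real.norm_of_nonneg (hmin0 x)]; exact min_le_left _ _)
    rwa [integral_indicator hS, ← ENNReal.ofReal_lt_ofReal_iff_of_nonneg hc,
      ofReal_integral_eq_lintegral_ofReal hint (ae_of_all _ hmin0)]
  have hqpos : 0 < ∫ x, q x ∂μ := hc.trans_lt hcq
  have hle : ∀ x, c / (∫ x, q x ∂μ) * q x ≤ min (n : ℝ) (G x) := fun x =>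
    (mul_le_of_le_one_left (hq0 x) ((div_le_one hqpos).2 hcq.le)).trans (hqmin x)
  refine ⟨fun x => c / (∫ x, q x ∂μ) * q x, measurable_const.mul hqm,
    fun x => mul_nonneg (by positivity) (hq0 x), fun x => (hle x).trans (min_le_right _ _),
    ⟨n, fun x => (hle x).trans (min_le_left _ _)⟩, fun x hx => by simp [q, hx],
    by rw [integral_const_mul, div_mul_cancel₀ _ hqpos.ne']⟩

theorem integrableOn_log_of_setLIntegral_ne_top {w : α → ℝ} (hw : Integrable w μ) {s : Set α}
    (hs : ∫⁻ x in s, ENNReal.ofReal (max 0 (Real.log (1 / w x))) ∂μ ≠ ∞) :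
    IntegrableOn (fun x => Real.log (w x)) s μ := by
  have hlog : AEStronglyMeasurable (fun x => Real.log (w x)) μ :=
    (Real.measurable_log.comp_aemeasurable hw.aemeasurable).aestronglyMeasurable
  have hpos : Integrable (fun x => max 0 (Real.log (w x))) μ :=
    hw.norm.mono' (aestronglyMeasurable_const.sup hlog) (ae_of_all _ fun x => by
      rw [Real.norm_of_nonneg (le_max_left _ _), ← Real.log_abs]
      exact max_le (norm_nonneg _) (Real.log_le_self (abs_nonneg _)))
  have hneg : IntegrableOn (fun x => max 0 (Real.log (1 / w x))) s μ := by
    refine (lintegral_ofReal_ne_top_iff_integrable ?_ (ae_of_all _ fun x => le_max_left _ _)).1 hs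
    simp only [one_div, Real.log_inv]
    exact (aestronglyMeasurable_const.sup hlog.neg).restrict
  refine (hpos.integrableOn.sub hneg).congr (ae_of_all _ fun x => ?_)
  simp only [Pi.sub_apply, one_div, Real.log_inv, max_comm (0 : ℝ),
    max_zero_sub_max_neg_zero_eq_self]

variable {ν : Measure α} {E : Type*} [NormedAddCommGroup E] {g : α → E} {x₀ : α} {ε : ℝ}
  {B J : Set α}

theorem integrableOn_of_norm_sub_le [IsFiniteMeasure ν] (hJ : MeasurableSet J)
    (hg : AEStronglyMeasurable g ν) (hgJ : ∀ x ∈ J, ‖g x - g x₀‖ ≤ ε) : IntegrableOn g J ν :=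
  .of_bound (measure_lt_top _ _) hg.restrict (‖g x₀‖ + ε)
    ((ae_restrict_iff' hJ).2 (ae_of_all _ fun x hx =>
      (norm_le_norm_add_norm_sub' _ (g x₀)).trans (by gcongr; exact hgJ x hx)))

variable [NormedSpace ℝ E]

theorem integrable_smul_of_norm_sub_le {h : α → ℝ} (hh : Integrable h μ)
    (hg : AEStronglyMeasurable g μ) (hhB : ∀ x ∉ B, h x = 0)
    (hgB : ∀ x ∈ B, ‖g x - g x₀‖ ≤ ε) : Integrable (fun x => h x • g x) μ := by
  refine (hh.norm.mul_const (‖g x₀‖ + ε)).mono' (hh.aestronglyMeasurable.smul hg)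
    (ae_of_all _ fun x => ?_)
  rw [norm_smul]
  by_cases hx : x ∈ B
  · gcongr
    exact (norm_le_norm_add_norm_sub' _ (g x₀)).trans (by gcongr; exact hgB x hx)
  · simp [hhB x hx]

variable [CompleteSpace E]

theorem norm_integral_smul_sub_le {h : α → ℝ} (hh : Integrable h μ) (h0 : 0 ≤ h)
    (hg : AEStronglyMeasurable g μ) (hhB : ∀ x ∉ B, h x = 0)
    (hgB : ∀ x ∈ B, ‖g x - g x₀‖ ≤ ε) :
    ‖∫ x, h x • g x ∂μ - (∫ x, h x ∂μ) • g x₀‖ ≤ ε * ∫ x, h x ∂μ := by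
  rw [← integral_smul_const, ← integral_sub (integrable_smul_of_norm_sub_le hh hg hhB hgB)
    (hh.smul_const _), ← integral_const_mul]
  refine norm_integral_le_of_norm_le (hh.const_mul ε) (ae_of_all _ fun x => ?_)
  rw [← smul_sub, norm_smul, Real.norm_of_nonneg (h0 x), mul_comm]
  by_cases hx : x ∈ B
  · exact mul_le_mul_of_nonneg_right (hgB x hx) (h0 x)
  · simp [hhB x hx]

theorem norm_setIntegral_sub_smul_le [IsFiniteMeasure ν] (hJ : MeasurableSet J)
    (hg : AEStronglyMeasurable g ν) (hgJ : ∀ x ∈ J, ‖g x - g x₀‖ ≤ ε) :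
    ‖∫ x in J, g x ∂ν - ν.real J • g x₀‖ ≤ ε * ν.real J := by
  rw [← setIntegral_const, ← integral_sub (integrableOn_of_norm_sub_le hJ hg hgJ)
    (integrableOn_const (measure_ne_top _ _))]
  exact norm_setIntegral_le_of_norm_le_const (measure_lt_top _ _) hgJ

theorem norm_integral_smul_sub_setIntegral_le [IsFiniteMeasure ν] {h : α → ℝ}
    (hh : Integrable h μ) (h0 : 0 ≤ h) (hgμ : AEStronglyMeasurable g μ)
    (hgν : AEStronglyMeasurable g ν) (hhB : ∀ x ∉ B, h x = 0) (hgB : ∀ x ∈ B, ‖g x - g x₀‖ ≤ ε)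
    (hJ : MeasurableSet J) (hJB : J ⊆ B) (hmass : ∫ x, h x ∂μ = ν.real J) :
    ‖∫ x, h x • g x ∂μ - ∫ x in J, g x ∂ν‖ ≤ 2 * ε * ν.real J := by
  have h₁ := norm_integral_smul_sub_le hh h0 hgμ hhB hgB
  have h₂ := norm_setIntegral_sub_smul_le hJ hgν fun x hx => hgB x (hJB hx)
  rw [hmass] at h₁
  have h₃ := norm_sub_le_norm_sub_add_norm_sub (∫ x, h x • g x ∂μ) (ν.real J • g x₀)
    (∫ x in J, g x ∂ν)
  rw [norm_sub_rev (ν.real J • g x₀)] at h₃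
  linarith

end

theorem IsCompact.exists_forall_dist_lt {X E : Type*} [PseudoMetricSpace X] [PseudoMetricSpace E]
    {K : Set X} {g : X → E} (hK : IsCompact K) (hg : Continuous g) {ε : ℝ} (hε : 0 < ε) :
    ∃ δ > 0, ∀ x ∈ K, ∀ y, dist x y < δ → dist (g x) (g y) < ε :=
  (Metric.mem_uniformity_dist.1 (hK.uniformContinuousAt_of_continuousAt g
    (fun _ _ => hg.continuousAt) (Metric.dist_mem_uniformity hε))).imp
    fun _ ⟨hδ, h⟩ => ⟨hδ, fun _ hx _ hxy => h hxy hx⟩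

section

open Function

variable {X : Type*} [MetricSpace X] [MeasurableSpace X] [OpensMeasurableSpace X]
  {μ ν : Measure X} {K A : Set X} {G : X → ℝ} {r : ℝ}
  {E : Type*} [NormedAddCommGroup E] [NormedSpace ℝ E] [CompleteSpace E]

theorem exists_measurable_partition_subset_ball (hK : IsCompact K) (hνK : ν Kᶜ = 0)
    (hνA : ν Aᶜ = 0) (hr : 0 < r) :
    ∃ (ι : Type) (_ : Fintype ι) (J : ι → Set X) (x : ι → X), (∀ i, MeasurableSet (J i)) ∧
      Pairwise (Disjoint on J) ∧ (∀ i, x i ∈ K ∧ x i ∈ A ∧ J i ⊆ ball (x i) r) ∧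
      ν (⋃ i, J i)ᶜ = 0 := by
  classical
  obtain ⟨t, -, htfin, hKt⟩ := finite_cover_balls_of_compact hK (half_pos hr)
  obtain ⟨n, y, rfl⟩ := htfin.fin_embedding
  set D := disjointed fun i : Fin n => K ∩ ball (y i) (r / 2)
  have hDm : ∀ i, MeasurableSet (D i) := fun i => by
    simp only [D, disjointed, Finset.sup_set_eq_biUnion]
    exact (hK.measurableSet.inter measurableSet_ball).diff
      (Finset.measurableSet_biUnion _ fun j _ => hK.measurableSet.inter measurableSet_ball)
  have hDsub : ∀ i, D i ⊆ K ∩ ball (y i) (r / 2) := disjointed_le _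
  have hUD : K ⊆ ⋃ i, D i := by
    rw [iUnion_disjointed, ← inter_iUnion]
    exact subset_inter subset_rfl (by simpa using hKt)
  choose x hx using fun i : {i : Fin n // (D i ∩ A).Nonempty} => i.2
  refine ⟨{i : Fin n // (D i ∩ A).Nonempty}, inferInstance, fun i => D i, x,
    fun i => hDm i, (disjoint_disjointed _).comp_of_injective Subtype.val_injective,
    fun i => ⟨(hDsub i (hx i).1).1, (hx i).2, fun z hz => ?_⟩, ?_⟩
  · exact (dist_triangle_right z (x i) (y i)).trans_lt
      (by linarith [mem_ball.1 (hDsub i hz).2, mem_ball.1 (hDsub i (hx i).1).2])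
  · refine measure_mono_null (fun z hz => ?_) (measure_union_null hνK hνA)
    by_contra hKA
    simp only [mem_union, mem_compl_iff, not_or, not_not] at hKA
    obtain ⟨i, hi⟩ := mem_iUnion.1 (hUD hKA.1)
    exact hz (mem_iUnion.2 ⟨⟨i, z, hi, hKA.2⟩, hi⟩)

theorem exists_density_le_norm_integral_smul_sub_le [IsFiniteMeasure μ] [IsFiniteMeasure ν]
    (hK : IsCompact K) (hνK : ν Kᶜ = 0) (hνA : ν Aᶜ = 0) (hG : Measurable G) (hG0 : 0 ≤ G)
    (hr : 0 < r) (hGA : ∀ x ∈ A, ∫⁻ z in ball x r, ENNReal.ofReal (G z) ∂μ = ∞) :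
    ∃ f : X → ℝ, Measurable f ∧ 0 ≤ f ∧ f ≤ G ∧ (∃ C, ∀ x, f x ≤ C) ∧
      ∫ x, f x ∂μ = ν.real univ ∧
      ∀ (g : X → E) (ε : ℝ), StronglyMeasurable g → (∀ x ∈ K, ∀ y ∈ ball x r, ‖g y - g x‖ ≤ ε) →
        ‖∫ x, f x • g x ∂μ - ∫ x, g x ∂ν‖ ≤ 2 * ε * ν.real univ := by
  obtain ⟨ι, _, J, x, hJm, hJd, hx, hJ⟩ := exists_measurable_partition_subset_ball hK hνK hνA hr
  set k : ℕ := Fintype.card ι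
  have hsum : ∑ i, ν.real (J i) = ν.real univ := by
    rw [← measureReal_iUnion_fintype hJd hJm, measureReal_congr (ae_eq_univ.2 hJ)]
  -- splitting the obstacle into `k` equal shares keeps the sum of the pieces below `G`
  have hGk : ∀ i, ∫⁻ z in ball (x i) r, ENNReal.ofReal (G z / k) ∂μ = ∞ := fun i => by
    have hk : (0 : ℝ) < k := Nat.cast_pos.2 (Fintype.card_pos_iff.2 ⟨i⟩)
    simp_rw [div_eq_mul_inv, ENNReal.ofReal_mul' (inv_nonneg.2 hk.le)]
    rw [lintegral_mul_const' _ _ ENNReal.ofReal_ne_top, hGA _ (hx i).2.1,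
      ENNReal.top_mul (ENNReal.ofReal_pos.2 (inv_pos.2 hk)).ne']
  choose h hhm hh0 hhG hhC hhB hhmass using fun i =>
    exists_le_of_setLIntegral_eq_top (hG.div_const k) (fun z => div_nonneg (hG0 z) k.cast_nonneg)
      measurableSet_ball (hGk i) (c := ν.real (J i)) measureReal_nonneg
  choose C hC using hhC
  have hhi : ∀ i, Integrable (h i) μ := fun i => .of_bound (hhm i).aestronglyMeasurable (C i)
    (ae_of_all _ fun z => by rw [Real.norm_of_nonneg (hh0 i z)]; exact hC i z)
  refine ⟨fun z => ∑ i, h i z, Finset.measurable_sum _ fun i _ => hhm i,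
    fun z => Finset.sum_nonneg fun i _ => hh0 i z, fun z => ?_,
    ⟨∑ i, C i, fun z => Finset.sum_le_sum fun i _ => hC i z⟩, ?_, ?_⟩
  · calc ∑ i, h i z ≤ ∑ _i : ι, G z / k := Finset.sum_le_sum fun i _ => hhG i z
      _ = k * (G z / k) := by simp [k]
      _ ≤ G z := by
        rcases eq_or_ne (k : ℝ) 0 with hk | hk
        · simpa [hk] using hG0 z
        · rw [mul_div_cancel₀ _ hk]
  · rw [integral_finsetSum _ fun i _ => hhi i, ← hsum]
    exact Finset.sum_congr rfl fun i _ => hhmass i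
  · intro g ε hg hgε
    have hgB : ∀ i, ∀ y ∈ ball (x i) r, ‖g y - g (x i)‖ ≤ ε := fun i => hgε _ (hx i).1
    have hν : ∫ z, g z ∂ν = ∑ i, ∫ z in J i, g z ∂ν := by
      rw [← setIntegral_univ, ← setIntegral_congr_set (ae_eq_univ.2 hJ),
        integral_iUnion_fintype hJm hJd fun i => integrableOn_of_norm_sub_le (hJm i)
          hg.aestronglyMeasurable fun y hy => hgB i y ((hx i).2.2 hy)]
    have hμ : ∫ z, (∑ i, h i z) • g z ∂μ = ∑ i, ∫ z, h i z • g z ∂μ := by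
      simp_rw [Finset.sum_smul]
      exact integral_finsetSum _ fun i _ =>
        integrable_smul_of_norm_sub_le (hhi i) hg.aestronglyMeasurable (hhB i) (hgB i)
    rw [hμ, hν, ← Finset.sum_sub_distrib, ← hsum, Finset.mul_sum]
    exact (norm_sum_le _ _).trans (Finset.sum_le_sum fun i _ =>
      norm_integral_smul_sub_setIntegral_le (hhi i) (hh0 i) hg.aestronglyMeasurable
        hg.aestronglyMeasurable (hhB i) (hgB i) (hJm i) (hx i).2.2 (hhmass i))

theorem exists_seq_density_le_tendsto_integral_smul [SecondCountableTopology X]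
    [IsFiniteMeasure μ] [IsFiniteMeasure ν] (hK : IsCompact K) (hνK : ν Kᶜ = 0)
    (hνA : ν Aᶜ = 0) (hG : Measurable G) (hG0 : 0 ≤ G)
    (hGA : ∀ x ∈ A, ∀ r > 0, ∫⁻ z in ball x r, ENNReal.ofReal (G z) ∂μ = ∞) :
    ∃ f : ℕ → X → ℝ, (∀ n, Measurable (f n)) ∧ (∀ n, 0 ≤ f n) ∧ (∀ n, f n ≤ G) ∧
      (∀ n, ∃ C, ∀ x, f n x ≤ C) ∧ (∀ n, ∫ x, f n x ∂μ = ν.real univ) ∧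
      ∀ g : X → E, Continuous g →
        Tendsto (fun n => ∫ x, f n x • g x ∂μ) atTop (𝓝 (∫ x, g x ∂ν)) := by
  choose f hfm hf0 hfG hfC hfmass hfg using fun n : ℕ =>
    exists_density_le_norm_integral_smul_sub_le (E := E) hK hνK hνA hG hG0
      (r := 1 / (n + 1)) Nat.one_div_pos_of_nat fun x hx => hGA x hx _ Nat.one_div_pos_of_nat
  refine ⟨f, hfm, hf0, hfG, hfC, hfmass, fun g hg => Metric.tendsto_atTop.2 fun ε hε => ?_⟩
  set V := ν.real univ
  have hV : 0 ≤ V := measureReal_nonneg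
  set ε' := ε / (2 * V + 1)
  obtain ⟨δ, hδ, hgδ⟩ := hK.exists_forall_dist_lt hg (ε := ε') (by positivity)
  obtain ⟨N, hN⟩ := exists_nat_one_div_lt hδ
  refine ⟨N, fun n hn => ?_⟩
  rw [dist_eq_norm]
  refine (hfg n g ε' hg.stronglyMeasurable fun x hx y hy => ?_).trans_lt ?_
  · rw [← dist_eq_norm, dist_comm]
    exact (hgδ x hx y ((mem_ball'.1 hy).trans (lt_of_le_of_lt (by gcongr) hN))).le
  · calc 2 * ε' * V = ε * (2 * V / (2 * V + 1)) := by ring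
      _ < ε * 1 := by gcongr; exact (div_lt_one (by positivity)).2 (by linarith)
      _ = ε := mul_one ε

end

instance : IsFiniteMeasure mT := by
  have := (volume.restrict (Ioc 0 (2 * π))).smul_finite
    (ENNReal.inv_ne_top.2 (ENNReal.ofReal_pos.2 Real.two_pi_pos).ne')
  unfold mT; infer_instance

theorem openArc_subset_ball (θ r : ℝ) : openArc (θ - r) (θ + r) ⊆ ball (exp (θ * I)) r := by
  rintro _ ⟨u, hu, rfl⟩
  have h := (lipschitzWith_circleMap 0 1).dist_le_mul u θ
  simp only [circleMap_zero, ofReal_one, one_mul, map_one, NNReal.coe_one] at h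
  refine mem_ball.2 (h.trans_lt ?_)
  rw [Real.dist_eq, abs_sub_lt_iff]
  constructor <;> linarith [hu.1, hu.2]

theorem exp_arg_mul_I_of_mem_unitCircle {x : ℂ} (hx : x ∈ unitCircle) : exp (arg x * I) = x := by
  simpa [mem_sphere_zero_iff_norm.1 hx] using norm_mul_exp_arg_mul_I x

theorem setLIntegral_ball_eq_top_of_notMem_coreSet {w : ℂ → ℝ} (hw : Integrable w mT) {x : ℂ}
    (hx : x ∈ unitCircle) (hxc : x ∉ coreSet w) {r : ℝ} (hr : 0 < r) :
    ∫⁻ z in ball x r, ENNReal.ofReal (max 0 (Real.log (1 / w z))) ∂mT = ∞ := by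
  by_contra hfin
  have hsub := openArc_subset_ball (arg x) r
  rw [exp_arg_mul_I_of_mem_unitCircle hx] at hsub
  have hmem : x ∈ openArc (arg x - r) (arg x + r) :=
    ⟨arg x, ⟨by linarith, by linarith⟩, exp_arg_mul_I_of_mem_unitCircle hx⟩
  exact hxc (mem_iUnion₂.2 ⟨_, _, mem_iUnion.2 ⟨integrableOn_log_of_setLIntegral_ne_top hw
    (ne_top_of_le_ne_top hfin (lintegral_mono_set hsub)), hmem⟩⟩)

theorem weak_star_approximation_with_obstacle_general
    (w : ℂ → ℝ) (hwInt : Integrable w mT)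
    (ν : Measure ℂ) [IsFiniteMeasure ν] (hνcirc : ν unitCircleᶜ = 0)
    (hνcore : ν (coreSet w) = 0) :
    ∃ f : ℕ → ℂ → ℝ,
      (∀ n, Measurable (f n)) ∧
      (∀ n x, 0 ≤ f n x) ∧
      (∀ n, ∃ C, ∀ x, f n x ≤ C) ∧
      -- (i) weak-star convergence of fₙ dm to ν
      (∀ g : ℂ → ℂ, Continuous g →
        Tendsto (fun n => ∫ x, g x * (f n x : ℂ) ∂mT) atTop (𝓝 (∫ x, g x ∂ν))) ∧
      -- (ii) total masses agree
      (∀ n, ∫ x, f n x ∂mT = (ν Set.univ).toReal) ∧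
      -- (iii) the obstacle bound
      (∀ n, ∀ᵐ x ∂mT, 0 < w x → f n x ≤ max 0 (Real.log (1 / w x))) := by
  set w' := hwInt.aestronglyMeasurable.mk w
  have hw' : w =ᵐ[mT] w' := hwInt.aestronglyMeasurable.ae_eq_mk
  have hνA : ν (unitCircle ∩ (coreSet w)ᶜ)ᶜ = 0 := by
    rw [compl_inter, compl_compl]
    exact measure_union_null hνcirc hνcore
  obtain ⟨f, hfm, hf0, hfG, hfC, hfmass, hfν⟩ :=
    exists_seq_density_le_tendsto_integral_smul (E := ℂ) (isCompact_sphere 0 1) hνcirc hνA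
      (G := fun z => max 0 (Real.log (1 / w' z)))
      (by fun_prop) (fun z => le_max_left _ _) fun x hx r hr => by
        rw [← setLIntegral_ball_eq_top_of_notMem_coreSet hwInt hx.1 hx.2 hr]
        refine setLIntegral_congr_fun_ae measurableSet_ball (hw'.mono fun z hz _ => ?_)
        rw [hz]
  refine ⟨f, hfm, hf0, hfC, fun g hg => ?_, hfmass, fun n => ?_⟩
  · simpa only [real_smul, mul_comm] using hfν g hg
  · filter_upwards [hw'] with x hx _
    rw [hx]
    exact hfG n x

/-- **Weak-star approximation with obstacles.** If ν is a finite positive singular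
measure on 𝕋 with ν(core(w)) = 0, there is a sequence of bounded non-negative
functions fₙ with fₙ dm → ν weak-star, ∫ fₙ dm = ν(𝕋), and fₙ ≤ log⁺(1/w) where w > 0. -/
theorem weak_star_approximation_with_obstacle
    (w : ℂ → ℝ) (hw0 : ∀ x, 0 ≤ w x) (hwInt : Integrable w mT)
    (ν : Measure ℂ) [IsFiniteMeasure ν] (hνcirc : ν unitCircleᶜ = 0)
    (hνsing : ν.MutuallySingular mT)
    (hνcore : ν (coreSet w) = 0) :
    ∃ f : ℕ → ℂ → ℝ,
      (∀ n, Measurable (f n)) ∧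
      (∀ n x, 0 ≤ f n x) ∧
      (∀ n, ∃ C, ∀ x, f n x ≤ C) ∧
      -- (i) weak-star convergence of fₙ dm to ν
      (∀ g : ℂ → ℂ, Continuous g →
        Tendsto (fun n => ∫ x, g x * (f n x : ℂ) ∂mT) atTop (𝓝 (∫ x, g x ∂ν))) ∧
      -- (ii) total masses agree
      (∀ n, ∫ x, f n x ∂mT = (ν Set.univ).toReal) ∧
      -- (iii) the obstacle bound
      (∀ n, ∀ᵐ x ∂mT, 0 < w x → f n x ≤ max 0 (Real.log (1 / w x))) :=
  weak_star_approximation_with_obstacle_general w hwInt ν hνcirc hνcore
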